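/- In a finite probability space with variables (U, X, Z, A, Y), A binary, assume: Z ⟂ Y | (A, X, U); there is a nonnegative q with E[q(Z,A,X) | A,X,U] = p(U | 1−A, X)/p(U | A, X) a.s.; Y^(a) ⟂ A | (X,U); positivity; consistency. Then E[min_z E[Y | Z=z, X, A=a] | A=1−a] ≤ E[Y^(a) | A=1−a] ≤ E[max_z E[Y | Z=z, X, A=a] | A=1−a]. -/

import Mathlib

open Finset Real
open scoped Classical

/-- Probability of an event under a pmf `P` on a finite sample space. -/
noncomputable def pr {Ω : Type*} [Fintype Ω] (P : Ω → ℝ) (E : Ω → Prop) : ℝ :=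
  ∑ ω, if E ω then P ω else 0

/-- Expectation of `f` under `P`. -/
noncomputable def ex {Ω : Type*} [Fintype Ω] (P : Ω → ℝ) (f : Ω → ℝ) : ℝ :=
  ∑ ω, P ω * f ω

/-- Conditional expectation `E[f | E]`. -/
noncomputable def ce {Ω : Type*} [Fintype Ω] (P : Ω → ℝ) (f : Ω → ℝ) (E : Ω → Prop) : ℝ :=
  (∑ ω, if E ω then P ω * f ω else 0) / pr P E

/-- Conditional probability `P(E | F)`. -/
noncomputable def cpr {Ω : Type*} [Fintype Ω] (P : Ω → ℝ) (E F : Ω → Prop) : ℝ :=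
  pr P (fun ω => E ω ∧ F ω) / pr P F

/-!
Fix a stratum `X = x`. Ignorability and consistency give
`E[Y^(a) | U, x, A = 1-a] = E[Y | U, x, A = a]`, so `E[Y^(a) | x, A = 1-a]` averages
`E[Y | U, x, A = a]` over the law of `U` in the arm `A = 1-a`. The bridge equation says that
`q(Z, a, x)` reweights the law of `U` in the arm `A = a` into that law, and since
`Z ⟂ Y | (A, X, U)` the reweighting can be done on the observed pair `(Z, Y)`:
`E[Y^(a) | x, A = 1-a] = E[q(Z, a, x) Y | x, A = a] = ∑_z w_z E[Y | z, x, A = a]` with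
`w_z = q(z, a, x) P(z | x, A = a) ≥ 0`, and the same computation for `Y = 1` gives `∑_z w_z = 1`.
A convex combination lies between the minimum and the maximum; average over `X` given `A = 1-a`.
-/

section Generic

variable {Ω : Type*} [Fintype Ω] {P : Ω → ℝ}

noncomputable def exOn (P : Ω → ℝ) (f : Ω → ℝ) (E : Ω → Prop) : ℝ :=
  ∑ ω, if E ω then P ω * f ω else 0

theorem ce_eq_exOn_div (f : Ω → ℝ) (E : Ω → Prop) : ce P f E = exOn P f E / pr P E := rfl

theorem exOn_congr {f g : Ω → ℝ} {E F : Ω → Prop} (hEF : ∀ ω, E ω ↔ F ω)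
    (hfg : ∀ ω, F ω → f ω = g ω) : exOn P f E = exOn P g F := by
  refine sum_congr rfl fun ω _ => ?_
  by_cases hF : F ω <;> simp [hEF ω, hF, hfg ω]

theorem pr_congr {E F : Ω → Prop} (hEF : ∀ ω, E ω ↔ F ω) : pr P E = pr P F :=
  sum_congr rfl fun ω _ => by simp only [hEF ω]

theorem ce_congr {f g : Ω → ℝ} {E F : Ω → Prop} (hEF : ∀ ω, E ω ↔ F ω)
    (hfg : ∀ ω, F ω → f ω = g ω) : ce P f E = ce P g F := by
  rw [ce_eq_exOn_div, ce_eq_exOn_div, exOn_congr hEF hfg, pr_congr hEF]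

theorem cpr_congr (E : Ω → Prop) {F F' : Ω → Prop} (hF : ∀ ω, F ω ↔ F' ω) :
    cpr P E F = cpr P E F' := by
  rw [cpr, cpr, pr_congr hF, pr_congr fun ω => Iff.rfl.and (hF ω)]

theorem exOn_const_mul (c : ℝ) (f : Ω → ℝ) (E : Ω → Prop) :
    exOn P (fun ω => c * f ω) E = c * exOn P f E := by
  simp only [exOn, mul_sum, mul_ite, mul_zero, mul_left_comm]

theorem exOn_const (c : ℝ) (E : Ω → Prop) : exOn P (fun _ => c) E = c * pr P E := by
  simp only [exOn, pr, mul_sum, mul_ite, mul_zero, mul_comm]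

theorem pr_eq_exOn_one (E : Ω → Prop) : pr P E = exOn P (fun _ => 1) E := by
  rw [exOn_const, one_mul]

theorem exOn_eq_sum_fiber {α : Type*} (g : Ω → α) (s : Finset α) (hs : ∀ ω, g ω ∈ s)
    (f : Ω → ℝ) (E : Ω → Prop) :
    exOn P f E = ∑ v ∈ s, exOn P f (fun ω => g ω = v ∧ E ω) := by
  unfold exOn
  rw [sum_comm]
  refine sum_congr rfl fun ω _ => ?_
  by_cases hE : E ω <;> simp [hE, hs ω]

theorem pr_eq_sum_fiber {α : Type*} [Fintype α] (g : Ω → α) (E : Ω → Prop) :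
    pr P E = ∑ v, pr P (fun ω => g ω = v ∧ E ω) := by
  simp only [pr_eq_exOn_one]
  exact exOn_eq_sum_fiber g univ (fun _ => mem_univ _) _ E

theorem exOn_eq_sum_value (f : Ω → ℝ) (E : Ω → Prop) :
    exOn P f E = ∑ y ∈ univ.image f, y * pr P (fun ω => f ω = y ∧ E ω) := by
  rw [exOn_eq_sum_fiber f _ (fun ω => mem_image_of_mem f (mem_univ ω))]
  refine sum_congr rfl fun y _ => ?_
  rw [← exOn_const]
  exact exOn_congr (fun _ => Iff.rfl) fun ω h => h.1

theorem pr_pos_of_forall_fiber_pos {α : Type*} [Fintype α] [Nonempty α] (g : Ω → α)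
    {E : Ω → Prop} (h : ∀ v, 0 < pr P (fun ω => g ω = v ∧ E ω)) : 0 < pr P E := by
  rw [pr_eq_sum_fiber g]
  exact sum_pos (fun v _ => h v) univ_nonempty

theorem ce_eq_sum_ce_mul_cpr {α : Type*} [Fintype α] (g : Ω → α) (f : Ω → ℝ) {E : Ω → Prop}
    (hfib : ∀ v, pr P (fun ω => g ω = v ∧ E ω) ≠ 0) :
    ce P f E = ∑ v, ce P f (fun ω => g ω = v ∧ E ω) * cpr P (fun ω => g ω = v) E := by
  rw [ce_eq_exOn_div, exOn_eq_sum_fiber g univ (fun _ => mem_univ _), sum_div]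
  refine sum_congr rfl fun v _ => ?_
  rw [ce_eq_exOn_div, cpr, div_mul_div_cancel₀ (hfib v)]

theorem sum_cpr_eq_one {α : Type*} [Fintype α] (g : Ω → α) {E : Ω → Prop} (hE : pr P E ≠ 0) :
    ∑ v, cpr P (fun ω => g ω = v) E = 1 := by
  simp only [cpr]
  rw [← sum_div, ← pr_eq_sum_fiber, div_self hE]

theorem ce_eq_of_eqOn {h : Ω → ℝ} {c : ℝ} {E : Ω → Prop} (hE : pr P E ≠ 0)
    (hc : ∀ ω, E ω → h ω = c) : ce P h E = c := by
  rw [ce_eq_exOn_div, exOn_congr (fun _ => Iff.rfl) hc, exOn_const, mul_div_cancel_right₀ _ hE]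

theorem ce_mul_eq_of_eqOn {h : Ω → ℝ} {c : ℝ} (f : Ω → ℝ) {E : Ω → Prop}
    (hc : ∀ ω, E ω → h ω = c) : ce P (fun ω => h ω * f ω) E = c * ce P f E := by
  rw [ce_eq_exOn_div, ce_eq_exOn_div, ← mul_div_assoc, ← exOn_const_mul]
  exact congrArg (· / _) (exOn_congr (fun _ => Iff.rfl) fun ω hω => by rw [hc ω hω])

theorem exOn_and_mul_pr_of_indep (f : Ω → ℝ) (G F : Ω → Prop)
    (hind : ∀ y, pr P (fun ω => G ω ∧ f ω = y ∧ F ω) * pr P F =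
      pr P (fun ω => G ω ∧ F ω) * pr P (fun ω => f ω = y ∧ F ω)) :
    exOn P f (fun ω => G ω ∧ F ω) * pr P F = pr P (fun ω => G ω ∧ F ω) * exOn P f F := by
  rw [exOn_eq_sum_value f, exOn_eq_sum_value f F, sum_mul, mul_sum]
  refine sum_congr rfl fun y _ => ?_
  rw [pr_congr fun _ => and_left_comm, mul_assoc, hind y, mul_left_comm]

theorem ce_and_eq_of_indep (f : Ω → ℝ) {G F : Ω → Prop}
    (hGF : pr P (fun ω => G ω ∧ F ω) ≠ 0) (hF : pr P F ≠ 0)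
    (hind : ∀ y, pr P (fun ω => f ω = y ∧ G ω ∧ F ω) * pr P F =
      pr P (fun ω => f ω = y ∧ F ω) * pr P (fun ω => G ω ∧ F ω)) :
    ce P f (fun ω => G ω ∧ F ω) = ce P f F := by
  rw [ce_eq_exOn_div, ce_eq_exOn_div, div_eq_div_iff hGF hF, exOn_and_mul_pr_of_indep, mul_comm]
  intro y
  rw [pr_congr fun _ => and_left_comm, hind y, mul_comm]

theorem ce_mul_eq_mul_ce_of_indep {α : Type*} [Fintype α] (g : Ω → α) (k : α → ℝ)
    {h : Ω → ℝ} (f : Ω → ℝ) {F : Ω → Prop} (hF : pr P F ≠ 0) (hk : ∀ ω, F ω → h ω = k (g ω))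
    (hind : ∀ v y, pr P (fun ω => g ω = v ∧ f ω = y ∧ F ω) * pr P F =
      pr P (fun ω => g ω = v ∧ F ω) * pr P (fun ω => f ω = y ∧ F ω)) :
    ce P (fun ω => h ω * f ω) F = ce P h F * ce P f F := by
  have hfib : ∀ (f' : Ω → ℝ) (v : α), exOn P (fun ω => h ω * f' ω) (fun ω => g ω = v ∧ F ω) =
      k v * exOn P f' (fun ω => g ω = v ∧ F ω) := fun f' v => by
    rw [← exOn_const_mul]
    exact exOn_congr (fun _ => Iff.rfl) fun ω hω => by rw [hk ω hω.2, hω.1]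
  have hh : exOn P h F = ∑ v, k v * pr P (fun ω => g ω = v ∧ F ω) := by
    simpa only [mul_one, pr_eq_exOn_one, exOn_eq_sum_fiber g univ (fun _ => mem_univ _) _ F]
      using sum_congr rfl fun v _ => hfib (fun _ => 1) v
  have hnum : exOn P (fun ω => h ω * f ω) F * pr P F = exOn P h F * exOn P f F := by
    rw [exOn_eq_sum_fiber g univ (fun _ => mem_univ _), hh, sum_mul, sum_mul]
    refine sum_congr rfl fun v _ => ?_
    rw [hfib, mul_assoc, exOn_and_mul_pr_of_indep f _ F (hind v), mul_assoc]
  simp only [ce_eq_exOn_div]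
  rw [div_mul_div_comm, div_eq_div_iff hF (mul_ne_zero hF hF), ← hnum]
  ring

theorem sum_ce_mul_cpr_eq_ce_mul_of_bridge {U : Type*} [Fintype U] (Uv : Ω → U) {h : Ω → ℝ}
    (f : Ω → ℝ) {E E' : Ω → Prop} (hE : pr P E ≠ 0)
    (hcell : ∀ u, pr P (fun ω => Uv ω = u ∧ E ω) ≠ 0)
    (hbridge : ∀ u, ce P h (fun ω => Uv ω = u ∧ E ω) =
      cpr P (fun ω => Uv ω = u) E' / cpr P (fun ω => Uv ω = u) E)
    (hfact : ∀ u, ce P (fun ω => h ω * f ω) (fun ω => Uv ω = u ∧ E ω) =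
      ce P h (fun ω => Uv ω = u ∧ E ω) * ce P f (fun ω => Uv ω = u ∧ E ω)) :
    ∑ u, ce P f (fun ω => Uv ω = u ∧ E ω) * cpr P (fun ω => Uv ω = u) E' =
      ce P (fun ω => h ω * f ω) E := by
  rw [ce_eq_sum_ce_mul_cpr Uv _ hcell]
  refine sum_congr rfl fun u _ => ?_
  have hcpr : cpr P (fun ω => Uv ω = u) E ≠ 0 := div_ne_zero (hcell u) hE
  rw [hfact, hbridge]
  field_simp

theorem ce_eq_one_of_bridge {U : Type*} [Fintype U] (Uv : Ω → U) {h : Ω → ℝ}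
    {E E' : Ω → Prop} (hE : pr P E ≠ 0) (hE' : pr P E' ≠ 0)
    (hcell : ∀ u, pr P (fun ω => Uv ω = u ∧ E ω) ≠ 0)
    (hbridge : ∀ u, ce P h (fun ω => Uv ω = u ∧ E ω) =
      cpr P (fun ω => Uv ω = u) E' / cpr P (fun ω => Uv ω = u) E) :
    ce P h E = 1 := by
  rw [ce_eq_sum_ce_mul_cpr Uv _ hcell, ← sum_cpr_eq_one Uv hE']
  refine sum_congr rfl fun u _ => ?_
  have hcpr : cpr P (fun ω => Uv ω = u) E ≠ 0 := div_ne_zero (hcell u) hE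
  rw [hbridge, div_mul_cancel₀ _ hcpr]

end Generic

theorem inf'_le_sum_mul {ι : Type*} {s : Finset ι} (hs : s.Nonempty) (w m : ι → ℝ)
    (hw : ∀ i ∈ s, 0 ≤ w i) (hw1 : ∑ i ∈ s, w i = 1) : s.inf' hs m ≤ ∑ i ∈ s, w i * m i :=
  calc s.inf' hs m = ∑ i ∈ s, w i * s.inf' hs m := by rw [← sum_mul, hw1, one_mul]
    _ ≤ ∑ i ∈ s, w i * m i :=
      sum_le_sum fun i hi => mul_le_mul_of_nonneg_left (inf'_le m hi) (hw i hi)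

theorem sum_mul_le_sup' {ι : Type*} {s : Finset ι} (hs : s.Nonempty) (w m : ι → ℝ)
    (hw : ∀ i ∈ s, 0 ≤ w i) (hw1 : ∑ i ∈ s, w i = 1) : ∑ i ∈ s, w i * m i ≤ s.sup' hs m :=
  calc ∑ i ∈ s, w i * m i ≤ ∑ i ∈ s, w i * s.sup' hs m :=
      sum_le_sum fun i hi => mul_le_mul_of_nonneg_left (le_sup' m hi) (hw i hi)
    _ = s.sup' hs m := by rw [← sum_mul, hw1, one_mul]

section Model

variable {Ω U X Z : Type*} [Fintype Ω] {P : Ω → ℝ}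
  {Uv : Ω → U} {Xv : Ω → X} {Zv : Ω → Z} {Av : Ω → Bool}

theorem pr_cell_pos (hpos : ∀ (b : Bool) (x : X) (u : U),
      0 < pr P fun ω => Av ω = b ∧ Xv ω = x ∧ Uv ω = u) (b : Bool) (x : X) (u : U) :
    0 < pr P fun ω => Uv ω = u ∧ Xv ω = x ∧ Av ω = b := by
  rw [pr_congr fun _ => and_rotate.trans and_left_comm]
  exact hpos b x u

theorem pr_stratum_pos [Fintype U] [Nonempty U] (hpos : ∀ (b : Bool) (x : X) (u : U),
      0 < pr P fun ω => Av ω = b ∧ Xv ω = x ∧ Uv ω = u) (b : Bool) (x : X) :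
    0 < pr P fun ω => Xv ω = x ∧ Av ω = b :=
  pr_pos_of_forall_fiber_pos Uv fun u => pr_cell_pos hpos b x u

theorem pr_proxy_cell_pos (hposZ : ∀ (z : Z) (b : Bool) (x : X),
      0 < pr P fun ω => Zv ω = z ∧ Av ω = b ∧ Xv ω = x) (z : Z) (b : Bool) (x : X) :
    0 < pr P fun ω => Zv ω = z ∧ Xv ω = x ∧ Av ω = b := by
  rw [pr_congr fun _ => Iff.rfl.and and_comm]
  exact hposZ z b x

theorem ce_cell_eq (f : Ω → ℝ) (b : Bool) (x : X) (u : U) :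
    ce P f (fun ω => Uv ω = u ∧ Xv ω = x ∧ Av ω = b) =
      ce P f (fun ω => Av ω = b ∧ Xv ω = x ∧ Uv ω = u) :=
  ce_congr (fun _ => and_rotate.trans and_left_comm) fun _ _ => rfl

theorem ce_cell_potential_eq {Yv Ya : Ω → ℝ} {a : Bool}
    (hpos : ∀ (b : Bool) (x : X) (u : U), 0 < pr P fun ω => Av ω = b ∧ Xv ω = x ∧ Uv ω = u)
    (hYaA : ∀ (y : ℝ) (b : Bool) (x : X) (u : U),
      pr P (fun ω => Ya ω = y ∧ Av ω = b ∧ Xv ω = x ∧ Uv ω = u) *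
          pr P (fun ω => Xv ω = x ∧ Uv ω = u) =
        pr P (fun ω => Ya ω = y ∧ Xv ω = x ∧ Uv ω = u) *
          pr P (fun ω => Av ω = b ∧ Xv ω = x ∧ Uv ω = u))
    (hcons : ∀ ω, Av ω = a → Yv ω = Ya ω) (x : X) (u : U) :
    ce P Ya (fun ω => Uv ω = u ∧ Xv ω = x ∧ Av ω = !a) =
      ce P Yv (fun ω => Uv ω = u ∧ Xv ω = x ∧ Av ω = a) := by
  have hXU : pr P (fun ω => Xv ω = x ∧ Uv ω = u) ≠ 0 :=
    (pr_pos_of_forall_fiber_pos Av fun b => hpos b x u).ne'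
  have hignorable : ∀ b, ce P Ya (fun ω => Av ω = b ∧ Xv ω = x ∧ Uv ω = u) =
      ce P Ya (fun ω => Xv ω = x ∧ Uv ω = u) := fun b =>
    ce_and_eq_of_indep Ya (hpos b x u).ne' hXU fun y => hYaA y b x u
  rw [ce_cell_eq, ce_cell_eq, hignorable, ← hignorable a]
  exact ce_congr (fun _ => Iff.rfl) fun ω hω => (hcons ω hω.1).symm

theorem ce_cell_bridge_mul_eq [Fintype Z] {Yv : Ω → ℝ} {q : Z → Bool → X → ℝ}
    (hpos : ∀ (b : Bool) (x : X) (u : U), 0 < pr P fun ω => Av ω = b ∧ Xv ω = x ∧ Uv ω = u)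
    (hZY : ∀ (z : Z) (y : ℝ) (b : Bool) (x : X) (u : U),
      pr P (fun ω => Zv ω = z ∧ Yv ω = y ∧ Av ω = b ∧ Xv ω = x ∧ Uv ω = u) *
          pr P (fun ω => Av ω = b ∧ Xv ω = x ∧ Uv ω = u) =
        pr P (fun ω => Zv ω = z ∧ Av ω = b ∧ Xv ω = x ∧ Uv ω = u) *
          pr P (fun ω => Yv ω = y ∧ Av ω = b ∧ Xv ω = x ∧ Uv ω = u))
    (b : Bool) (x : X) (u : U) :
    ce P (fun ω => q (Zv ω) b (Xv ω) * Yv ω) (fun ω => Uv ω = u ∧ Xv ω = x ∧ Av ω = b) =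
      ce P (fun ω => q (Zv ω) b (Xv ω)) (fun ω => Uv ω = u ∧ Xv ω = x ∧ Av ω = b) *
        ce P Yv (fun ω => Uv ω = u ∧ Xv ω = x ∧ Av ω = b) := by
  rw [ce_cell_eq, ce_cell_eq, ce_cell_eq]
  exact ce_mul_eq_mul_ce_of_indep Zv (fun z => q z b x) Yv (hpos b x u).ne'
    (fun ω hω => by rw [hω.2.1]) fun z y => hZY z y b x u

theorem ce_cell_bridge_eq {q : Z → Bool → X → ℝ}
    (hbridgeq : ∀ (b : Bool) (x : X) (u : U),
      ce P (fun ω => q (Zv ω) b (Xv ω)) (fun ω => Av ω = b ∧ Xv ω = x ∧ Uv ω = u) =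
        cpr P (fun ω => Uv ω = u) (fun ω => Av ω = !b ∧ Xv ω = x) /
          cpr P (fun ω => Uv ω = u) (fun ω => Av ω = b ∧ Xv ω = x))
    (b : Bool) (x : X) (u : U) :
    ce P (fun ω => q (Zv ω) b (Xv ω)) (fun ω => Uv ω = u ∧ Xv ω = x ∧ Av ω = b) =
      cpr P (fun ω => Uv ω = u) (fun ω => Xv ω = x ∧ Av ω = !b) /
        cpr P (fun ω => Uv ω = u) (fun ω => Xv ω = x ∧ Av ω = b) := by
  rw [ce_cell_eq, hbridgeq]
  congr 1 <;> exact cpr_congr _ fun _ => and_comm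

theorem sum_bridge_weights_eq_one [Fintype U] [Nonempty U] [Fintype Z] {q : Z → Bool → X → ℝ}
    (hpos : ∀ (b : Bool) (x : X) (u : U), 0 < pr P fun ω => Av ω = b ∧ Xv ω = x ∧ Uv ω = u)
    (hposZ : ∀ (z : Z) (b : Bool) (x : X), 0 < pr P fun ω => Zv ω = z ∧ Av ω = b ∧ Xv ω = x)
    (hbridgeq : ∀ (b : Bool) (x : X) (u : U),
      ce P (fun ω => q (Zv ω) b (Xv ω)) (fun ω => Av ω = b ∧ Xv ω = x ∧ Uv ω = u) =
        cpr P (fun ω => Uv ω = u) (fun ω => Av ω = !b ∧ Xv ω = x) /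
          cpr P (fun ω => Uv ω = u) (fun ω => Av ω = b ∧ Xv ω = x))
    (a : Bool) (x : X) :
    ∑ z, q z a x * cpr P (fun ω => Zv ω = z) (fun ω => Xv ω = x ∧ Av ω = a) = 1 := by
  have hmean : ce P (fun ω => q (Zv ω) a (Xv ω)) (fun ω => Xv ω = x ∧ Av ω = a) = 1 :=
    ce_eq_one_of_bridge Uv (pr_stratum_pos hpos a x).ne' (pr_stratum_pos hpos (!a) x).ne'
      (fun u => (pr_cell_pos hpos a x u).ne') (ce_cell_bridge_eq hbridgeq a x)
  rw [← hmean, ce_eq_sum_ce_mul_cpr Zv _ fun z => (pr_proxy_cell_pos hposZ z a x).ne']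
  refine sum_congr rfl fun z _ => ?_
  rw [ce_eq_of_eqOn (pr_proxy_cell_pos hposZ z a x).ne' fun ω hω => by rw [hω.1, hω.2.1]]

theorem ce_stratum_potential_eq_sum [Fintype U] [Nonempty U] [Fintype Z] {Yv Ya : Ω → ℝ}
    {a : Bool} {q : Z → Bool → X → ℝ}
    (hpos : ∀ (b : Bool) (x : X) (u : U), 0 < pr P fun ω => Av ω = b ∧ Xv ω = x ∧ Uv ω = u)
    (hposZ : ∀ (z : Z) (b : Bool) (x : X), 0 < pr P fun ω => Zv ω = z ∧ Av ω = b ∧ Xv ω = x)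
    (hZY : ∀ (z : Z) (y : ℝ) (b : Bool) (x : X) (u : U),
      pr P (fun ω => Zv ω = z ∧ Yv ω = y ∧ Av ω = b ∧ Xv ω = x ∧ Uv ω = u) *
          pr P (fun ω => Av ω = b ∧ Xv ω = x ∧ Uv ω = u) =
        pr P (fun ω => Zv ω = z ∧ Av ω = b ∧ Xv ω = x ∧ Uv ω = u) *
          pr P (fun ω => Yv ω = y ∧ Av ω = b ∧ Xv ω = x ∧ Uv ω = u))
    (hbridgeq : ∀ (b : Bool) (x : X) (u : U),
      ce P (fun ω => q (Zv ω) b (Xv ω)) (fun ω => Av ω = b ∧ Xv ω = x ∧ Uv ω = u) =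
        cpr P (fun ω => Uv ω = u) (fun ω => Av ω = !b ∧ Xv ω = x) /
          cpr P (fun ω => Uv ω = u) (fun ω => Av ω = b ∧ Xv ω = x))
    (hYaA : ∀ (y : ℝ) (b : Bool) (x : X) (u : U),
      pr P (fun ω => Ya ω = y ∧ Av ω = b ∧ Xv ω = x ∧ Uv ω = u) *
          pr P (fun ω => Xv ω = x ∧ Uv ω = u) =
        pr P (fun ω => Ya ω = y ∧ Xv ω = x ∧ Uv ω = u) *
          pr P (fun ω => Av ω = b ∧ Xv ω = x ∧ Uv ω = u))
    (hcons : ∀ ω, Av ω = a → Yv ω = Ya ω) (x : X) :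
    ce P Ya (fun ω => Xv ω = x ∧ Av ω = !a) =
      ∑ z, q z a x * cpr P (fun ω => Zv ω = z) (fun ω => Xv ω = x ∧ Av ω = a) *
        ce P Yv (fun ω => Zv ω = z ∧ Xv ω = x ∧ Av ω = a) :=
  calc ce P Ya (fun ω => Xv ω = x ∧ Av ω = !a)
      = ∑ u, ce P Yv (fun ω => Uv ω = u ∧ Xv ω = x ∧ Av ω = a) *
          cpr P (fun ω => Uv ω = u) (fun ω => Xv ω = x ∧ Av ω = !a) := by
        rw [ce_eq_sum_ce_mul_cpr Uv Ya fun u => (pr_cell_pos hpos (!a) x u).ne']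
        simp only [ce_cell_potential_eq hpos hYaA hcons x]
    _ = ce P (fun ω => q (Zv ω) a (Xv ω) * Yv ω) (fun ω => Xv ω = x ∧ Av ω = a) :=
        sum_ce_mul_cpr_eq_ce_mul_of_bridge Uv Yv (pr_stratum_pos hpos a x).ne'
          (fun u => (pr_cell_pos hpos a x u).ne') (ce_cell_bridge_eq hbridgeq a x)
          (ce_cell_bridge_mul_eq hpos hZY a x)
    _ = ∑ z, q z a x * cpr P (fun ω => Zv ω = z) (fun ω => Xv ω = x ∧ Av ω = a) *
          ce P Yv (fun ω => Zv ω = z ∧ Xv ω = x ∧ Av ω = a) := by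
        rw [ce_eq_sum_ce_mul_cpr Zv _ fun z => (pr_proxy_cell_pos hposZ z a x).ne']
        refine sum_congr rfl fun z _ => ?_
        rw [ce_mul_eq_of_eqOn Yv fun ω hω => by rw [hω.1, hω.2.1]]
        ring

end Model

theorem single_treatment_proxy_bounds_general {Ω U X Z : Type*} [Fintype Ω] [Fintype U] [Fintype X]
    [Fintype Z] [Nonempty Z]
    (P : Ω → ℝ)
    (Uv : Ω → U) (Xv : Ω → X) (Zv : Ω → Z) (Av : Ω → Bool) (Yv : Ω → ℝ)
    (a : Bool) (Ya : Ω → ℝ)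
    -- Z ⟂ Y | (A, X, U)
    (hZY : ∀ (z : Z) (y : ℝ) (a' : Bool) (x : X) (u : U),
      pr P (fun ω => Zv ω = z ∧ Yv ω = y ∧ Av ω = a' ∧ Xv ω = x ∧ Uv ω = u) *
          pr P (fun ω => Av ω = a' ∧ Xv ω = x ∧ Uv ω = u) =
        pr P (fun ω => Zv ω = z ∧ Av ω = a' ∧ Xv ω = x ∧ Uv ω = u) *
          pr P (fun ω => Yv ω = y ∧ Av ω = a' ∧ Xv ω = x ∧ Uv ω = u))
    -- treatment bridge function q
    (q : Z → Bool → X → ℝ) (hq : ∀ z a' x, 0 ≤ q z a' x)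
    (hbridgeq : ∀ (a' : Bool) (x : X) (u : U),
      ce P (fun ω => q (Zv ω) a' (Xv ω)) (fun ω => Av ω = a' ∧ Xv ω = x ∧ Uv ω = u) =
        cpr P (fun ω => Uv ω = u) (fun ω => Av ω = !a' ∧ Xv ω = x) /
          cpr P (fun ω => Uv ω = u) (fun ω => Av ω = a' ∧ Xv ω = x))
    -- Y^(a) ⟂ A | (X,U)
    (hYaA : ∀ (y : ℝ) (a' : Bool) (x : X) (u : U),
      pr P (fun ω => Ya ω = y ∧ Av ω = a' ∧ Xv ω = x ∧ Uv ω = u) *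
          pr P (fun ω => Xv ω = x ∧ Uv ω = u) =
        pr P (fun ω => Ya ω = y ∧ Xv ω = x ∧ Uv ω = u) *
          pr P (fun ω => Av ω = a' ∧ Xv ω = x ∧ Uv ω = u))
    -- positivity
    (hpos : ∀ (a' : Bool) (x : X) (u : U),
      0 < pr P fun ω => Av ω = a' ∧ Xv ω = x ∧ Uv ω = u)
    (hposZ : ∀ (z : Z) (a' : Bool) (x : X),
      0 < pr P fun ω => Zv ω = z ∧ Av ω = a' ∧ Xv ω = x)
    -- consistency
    (hcons : ∀ ω, Av ω = a → Yv ω = Ya ω) :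
    (∑ x : X,
        (univ.inf' univ_nonempty fun z : Z =>
            ce P Yv fun ω => Zv ω = z ∧ Xv ω = x ∧ Av ω = a) *
          cpr P (fun ω => Xv ω = x) (fun ω => Av ω = !a)) ≤
      ce P Ya (fun ω => Av ω = !a) ∧
    ce P Ya (fun ω => Av ω = !a) ≤
      ∑ x : X,
        (univ.sup' univ_nonempty fun z : Z =>
            ce P Yv fun ω => Zv ω = z ∧ Xv ω = x ∧ Av ω = a) *
          cpr P (fun ω => Xv ω = x) (fun ω => Av ω = !a) := by
  rcases isEmpty_or_nonempty Ω with hΩ | ⟨⟨ω₀⟩⟩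
  · simp [ce, cpr, pr]
  have : Nonempty U := ⟨Uv ω₀⟩
  have : Nonempty X := ⟨Xv ω₀⟩
  have hstratum := pr_stratum_pos hpos
  have hA : 0 < pr P fun ω => Av ω = !a := pr_pos_of_forall_fiber_pos Xv (hstratum !a)
  have hweight : ∀ x z, 0 ≤ q z a x * cpr P (fun ω => Zv ω = z) (fun ω => Xv ω = x ∧ Av ω = a) :=
    fun x z => mul_nonneg (hq z a x)
      (div_nonneg (pr_proxy_cell_pos hposZ z a x).le (hstratum a x).le)
  have hcpr : ∀ x, 0 ≤ cpr P (fun ω => Xv ω = x) (fun ω => Av ω = !a) :=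
    fun x => div_nonneg (hstratum (!a) x).le hA.le
  rw [ce_eq_sum_ce_mul_cpr Xv Ya fun x => (hstratum (!a) x).ne']
  simp only [ce_stratum_potential_eq_sum hpos hposZ hZY hbridgeq hYaA hcons]
  have hsum := sum_bridge_weights_eq_one hpos hposZ hbridgeq a
  exact ⟨sum_le_sum fun x _ => mul_le_mul_of_nonneg_right
      (inf'_le_sum_mul _ _ _ (fun z _ => hweight x z) (hsum x)) (hcpr x),
    sum_le_sum fun x _ => mul_le_mul_of_nonneg_right
      (sum_mul_le_sup' _ _ _ (fun z _ => hweight x z) (hsum x)) (hcpr x)⟩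

/-- Theorem 2: single treatment-confounding-proxy bounds:
`E[min_z E[Y | z, X, A=a] | A=1−a] ≤ E[Y^(a) | A=1−a] ≤ E[max_z E[Y | z, X, A=a] | A=1−a]`. -/
theorem single_treatment_proxy_bounds {Ω U X Z : Type*} [Fintype Ω] [Fintype U] [Fintype X]
    [Fintype Z] [Nonempty Z]
    (P : Ω → ℝ) (hP : ∀ ω, 0 ≤ P ω) (hP1 : ∑ ω, P ω = 1)
    (Uv : Ω → U) (Xv : Ω → X) (Zv : Ω → Z) (Av : Ω → Bool) (Yv : Ω → ℝ)
    (a : Bool) (Ya : Ω → ℝ)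
    -- Z ⟂ Y | (A, X, U)
    (hZY : ∀ (z : Z) (y : ℝ) (a' : Bool) (x : X) (u : U),
      pr P (fun ω => Zv ω = z ∧ Yv ω = y ∧ Av ω = a' ∧ Xv ω = x ∧ Uv ω = u) *
          pr P (fun ω => Av ω = a' ∧ Xv ω = x ∧ Uv ω = u) =
        pr P (fun ω => Zv ω = z ∧ Av ω = a' ∧ Xv ω = x ∧ Uv ω = u) *
          pr P (fun ω => Yv ω = y ∧ Av ω = a' ∧ Xv ω = x ∧ Uv ω = u))
    -- treatment bridge function q
    (q : Z → Bool → X → ℝ) (hq : ∀ z a' x, 0 ≤ q z a' x)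
    (hbridgeq : ∀ (a' : Bool) (x : X) (u : U),
      ce P (fun ω => q (Zv ω) a' (Xv ω)) (fun ω => Av ω = a' ∧ Xv ω = x ∧ Uv ω = u) =
        cpr P (fun ω => Uv ω = u) (fun ω => Av ω = !a' ∧ Xv ω = x) /
          cpr P (fun ω => Uv ω = u) (fun ω => Av ω = a' ∧ Xv ω = x))
    -- Y^(a) ⟂ A | (X,U)
    (hYaA : ∀ (y : ℝ) (a' : Bool) (x : X) (u : U),
      pr P (fun ω => Ya ω = y ∧ Av ω = a' ∧ Xv ω = x ∧ Uv ω = u) *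
          pr P (fun ω => Xv ω = x ∧ Uv ω = u) =
        pr P (fun ω => Ya ω = y ∧ Xv ω = x ∧ Uv ω = u) *
          pr P (fun ω => Av ω = a' ∧ Xv ω = x ∧ Uv ω = u))
    -- positivity
    (hpos : ∀ (a' : Bool) (x : X) (u : U),
      0 < pr P fun ω => Av ω = a' ∧ Xv ω = x ∧ Uv ω = u)
    (hposZ : ∀ (z : Z) (a' : Bool) (x : X),
      0 < pr P fun ω => Zv ω = z ∧ Av ω = a' ∧ Xv ω = x)
    -- consistency
    (hcons : ∀ ω, Av ω = a → Yv ω = Ya ω) :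
    (∑ x : X,
        (univ.inf' univ_nonempty fun z : Z =>
            ce P Yv fun ω => Zv ω = z ∧ Xv ω = x ∧ Av ω = a) *
          cpr P (fun ω => Xv ω = x) (fun ω => Av ω = !a)) ≤
      ce P Ya (fun ω => Av ω = !a) ∧
    ce P Ya (fun ω => Av ω = !a) ≤
      ∑ x : X,
        (univ.sup' univ_nonempty fun z : Z =>
            ce P Yv fun ω => Zv ω = z ∧ Xv ω = x ∧ Av ω = a) *
          cpr P (fun ω => Xv ω = x) (fun ω => Av ω = !a) :=
  single_treatment_proxy_bounds_general P Uv Xv Zv Av Yv a Ya hZY q hq hbridgeq hYaA hpos hposZ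
    hcons
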